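/- Let X ∈ ℂ^{n₁×n₂×n₃} and let U₁ ∈ ℂ^{n₁×r₁}, U₂ ∈ ℂ^{(n₁n₂)×r₂} have orthonormal columns. Define X̃ entrywise by X̃_{i₁,i₂,i₃} = U₁(i₁,:) U₁* U₂((i₂−1)n₁+1:i₂n₁,:) U₂* X₂(:,i₃), where X₂ is the second unfolding of X. Then ‖X − X̃‖_F² ≤ ‖(I − U₁U₁*)X₁‖_F² + ‖(I − U₂U₂*)X₂‖_F², where X₁ is the first unfolding of X. -/

import Mathlib

open Matrix

/-- Frobenius norm of a complex matrix. -/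
noncomputable def frob {m n : Type*} [Fintype m] [Fintype n] (A : Matrix m n ℂ) : ℝ :=
  Real.sqrt (∑ i, ∑ j, ‖A i j‖ ^ 2)

/-- Frobenius norm of a 3-tensor. -/
noncomputable def frobT {n₁ n₂ n₃ : ℕ} (X : Fin n₁ → Fin n₂ → Fin n₃ → ℂ) : ℝ :=
  Real.sqrt (∑ i, ∑ j, ∑ k, ‖X i j k‖ ^ 2)

/-!
Unfold `X − X̃` along the first mode. Writing `P₁ = U₁U₁ᴴ`, the unfolded approximation is
`P₁ Y`, where `Y` is `U₂U₂ᴴX₂` reshaped like `X₁`, so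
`X₁ − P₁ Y = (1 − P₁) X₁ + P₁ (X₁ − Y)`. The two summands are orthogonal in the Frobenius
inner product, and `P₁` is a contraction, so the squared error is at most
`‖(1 − P₁) X₁‖² + ‖X₁ − Y‖²`; the last term is `‖(1 − U₂U₂ᴴ) X₂‖²` reshaped.
-/

section Frobenius

variable {m n : Type*} [Fintype m] [Fintype n]

lemma frob_sq (A : Matrix m n ℂ) : frob A ^ 2 = ∑ i, ∑ j, ‖A i j‖ ^ 2 :=
  Real.sq_sqrt (by positivity)

lemma frob_add_sq_of_trace_eq_zero {A B : Matrix m n ℂ} (h : (Bᴴ * A).trace = 0) :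
    frob (A + B) ^ 2 = frob A ^ 2 + frob B ^ 2 := by
  have hinner : ∑ i, ∑ j, A i j * starRingEnd ℂ (B i j) = 0 := by
    rw [← h, trace, Finset.sum_comm]
    simp [mul_apply, mul_comm]
  have hre : ∑ i, ∑ j, (A i j * starRingEnd ℂ (B i j)).re = 0 := by
    simp only [← Complex.re_sum, hinner, Complex.zero_re]
  simp only [frob_sq, Matrix.add_apply, Complex.sq_norm, Complex.normSq_add, Finset.sum_add_distrib,
    ← Finset.mul_sum, hre]
  ring

lemma frob_one_sub_mul_add_mul_sq_le [DecidableEq m] {P : Matrix m m ℂ}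
    (hP : IsStarProjection P) (A B : Matrix m n ℂ) :
    frob ((1 - P) * A + P * B) ^ 2 ≤ frob ((1 - P) * A) ^ 2 + frob B ^ 2 := by
  have orth : ∀ C D : Matrix m n ℂ, ((P * D)ᴴ * ((1 - P) * C)).trace = 0 := fun C D => by
    rw [conjTranspose_mul, ← star_eq_conjTranspose P, hP.isSelfAdjoint.star_eq,
      Matrix.mul_assoc, ← Matrix.mul_assoc P, hP.mul_one_sub_self, Matrix.zero_mul,
      Matrix.mul_zero, trace_zero]
  have hB : frob B ^ 2 = frob ((1 - P) * B) ^ 2 + frob (P * B) ^ 2 := by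
    rw [← frob_add_sq_of_trace_eq_zero (orth B B), ← Matrix.add_mul, sub_add_cancel,
      Matrix.one_mul]
  rw [frob_add_sq_of_trace_eq_zero (orth A B), hB]
  nlinarith [sq_nonneg (frob ((1 - P) * B))]

end Frobenius

lemma isStarProjection_mul_conjTranspose {m r R : Type*} [Fintype m] [Fintype r]
    [DecidableEq r] [Semiring R] [StarRing R] {U : Matrix m r R}
    (hU : Uᴴ * U = 1) : IsStarProjection (U * Uᴴ) where
  isIdempotentElem := by
    rw [IsIdempotentElem, Matrix.mul_assoc, ← Matrix.mul_assoc Uᴴ, hU, Matrix.one_mul]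
  isSelfAdjoint := by
    rw [IsSelfAdjoint, star_eq_conjTranspose, conjTranspose_mul, conjTranspose_conjTranspose]

section Unfolding

variable {α β γ R : Type*}

def secondToFirstUnfolding (M : Matrix (β × α) γ R) : Matrix α (γ × β) R :=
  of fun i p => M (p.2, i) p.1

lemma secondToFirstUnfolding_sub [Sub R] (M N : Matrix (β × α) γ R) :
    secondToFirstUnfolding (M - N) = secondToFirstUnfolding M - secondToFirstUnfolding N :=
  rfl

lemma of_mul_apply_eq_secondToFirstUnfolding_mul {ρ : Type*} [Fintype ρ] [NonUnitalNonAssocSemiring R]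
    (U : Matrix (β × α) ρ R) (N : Matrix ρ γ R) (b : β) (i : α) (k : γ) :
    ((of fun j r => U (b, j) r) * N) i k = secondToFirstUnfolding (U * N) i (k, b) :=
  rfl

lemma frob_secondToFirstUnfolding [Fintype α] [Fintype β] [Fintype γ]
    (M : Matrix (β × α) γ ℂ) : frob (secondToFirstUnfolding M) = frob M := by
  unfold frob secondToFirstUnfolding
  simp only [of_apply, Fintype.sum_prod_type]
  exact congrArg Real.sqrt ((Finset.sum_congr rfl fun _ _ => Finset.sum_comm).trans Finset.sum_comm)

end Unfolding

lemma frobT_eq_frob {n₁ n₂ n₃ : ℕ} (T : Fin n₁ → Fin n₂ → Fin n₃ → ℂ) :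
    frobT T = frob (of fun i (p : Fin n₃ × Fin n₂) => T i p.2 p.1) := by
  unfold frob frobT
  simp only [of_apply, Fintype.sum_prod_type]
  exact congrArg Real.sqrt (Finset.sum_congr rfl fun _ _ => Finset.sum_comm)

theorem stmt4_general {n₁ n₂ n₃ r₁ r₂ : ℕ}
    (X : Fin n₁ → Fin n₂ → Fin n₃ → ℂ)
    (X₁ : Matrix (Fin n₁) (Fin n₃ × Fin n₂) ℂ)
    (hX₁ : ∀ i p, X₁ i p = X i p.2 p.1)
    (X₂ : Matrix (Fin n₂ × Fin n₁) (Fin n₃) ℂ)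
    (hX₂ : ∀ p k, X₂ p k = X p.2 p.1 k)
    (U₁ : Matrix (Fin n₁) (Fin r₁) ℂ) (hU₁on : U₁ᴴ * U₁ = 1)
    (U₂ : Matrix (Fin n₂ × Fin n₁) (Fin r₂) ℂ)
    (Xt : Fin n₁ → Fin n₂ → Fin n₃ → ℂ)
    (hXt : ∀ i₁ i₂ i₃, Xt i₁ i₂ i₃ =
      (U₁ * U₁ᴴ * (Matrix.of fun (j : Fin n₁) (β : Fin r₂) => U₂ (i₂, j) β)
        * U₂ᴴ * X₂) i₁ i₃) :
    frobT (fun i j k => X i j k - Xt i j k) ^ 2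
      ≤ frob ((1 - U₁ * U₁ᴴ) * X₁) ^ 2 + frob ((1 - U₂ * U₂ᴴ) * X₂) ^ 2 := by
  set P := U₁ * U₁ᴴ
  have hX₁₂ : X₁ = secondToFirstUnfolding X₂ := by
    ext i p
    rw [hX₁, secondToFirstUnfolding, of_apply, hX₂]
  have hXt₁ : of (fun i (p : Fin n₃ × Fin n₂) => Xt i p.2 p.1)
      = P * secondToFirstUnfolding (U₂ * (U₂ᴴ * X₂)) := by
    ext i ⟨k, j⟩
    rw [of_apply, hXt, Matrix.mul_assoc, Matrix.mul_assoc, mul_apply, mul_apply]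
    exact Finset.sum_congr rfl fun l _ =>
      congrArg _ (of_mul_apply_eq_secondToFirstUnfolding_mul U₂ _ j l k)
  have hsplit : of (fun i (p : Fin n₃ × Fin n₂) => X i p.2 p.1 - Xt i p.2 p.1)
      = (1 - P) * X₁ + P * secondToFirstUnfolding ((1 - U₂ * U₂ᴴ) * X₂) := by
    rw [Matrix.sub_mul 1 (U₂ * U₂ᴴ) X₂, Matrix.one_mul, Matrix.mul_assoc U₂,
      secondToFirstUnfolding_sub, ← hX₁₂, Matrix.mul_sub, ← hXt₁, Matrix.sub_mul, Matrix.one_mul,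
      sub_add_sub_cancel]
    ext i p
    simp [hX₁]
  rw [frobT_eq_frob, hsplit, ← frob_secondToFirstUnfolding ((1 - U₂ * U₂ᴴ) * X₂)]
  exact frob_one_sub_mul_add_mul_sq_le (isStarProjection_mul_conjTranspose hU₁on) _ _

/-- Projection error bound for the TT approximation built from orthonormal bases
U₁, U₂ of the column spaces of the unfoldings:
‖X − X̃‖_F² ≤ ‖(I − U₁U₁ᴴ)X₁‖_F² + ‖(I − U₂U₂ᴴ)X₂‖_F². -/
theorem stmt4 {n₁ n₂ n₃ r₁ r₂ : ℕ}
    (X : Fin n₁ → Fin n₂ → Fin n₃ → ℂ)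
    (X₁ : Matrix (Fin n₁) (Fin n₃ × Fin n₂) ℂ)
    (hX₁ : ∀ i p, X₁ i p = X i p.2 p.1)
    (X₂ : Matrix (Fin n₂ × Fin n₁) (Fin n₃) ℂ)
    (hX₂ : ∀ p k, X₂ p k = X p.2 p.1 k)
    (U₁ : Matrix (Fin n₁) (Fin r₁) ℂ) (hU₁on : U₁ᴴ * U₁ = 1)
    (U₂ : Matrix (Fin n₂ × Fin n₁) (Fin r₂) ℂ) (hU₂on : U₂ᴴ * U₂ = 1)
    (Xt : Fin n₁ → Fin n₂ → Fin n₃ → ℂ)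
    (hXt : ∀ i₁ i₂ i₃, Xt i₁ i₂ i₃ =
      (U₁ * U₁ᴴ * (Matrix.of fun (j : Fin n₁) (β : Fin r₂) => U₂ (i₂, j) β)
        * U₂ᴴ * X₂) i₁ i₃) :
    frobT (fun i j k => X i j k - Xt i j k) ^ 2
      ≤ frob ((1 - U₁ * U₁ᴴ) * X₁) ^ 2 + frob ((1 - U₂ * U₂ᴴ) * X₂) ^ 2 :=
  stmt4_general X X₁ hX₁ X₂ hX₂ U₁ hU₁on U₂ Xt hXt
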